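/- Let p⁻, p₀, p⁺ ≥ 0 with p⁻ + p₀ + p⁺ = 1 and p⁻ > p⁺, let X₁, X₂, … be i.i.d. with P(Xᵢ = −1) = p⁻, P(Xᵢ = 0) = p₀, P(Xᵢ = +1) = p⁺, and let Y₀ = 0, Yᵢ = max(0, Yᵢ₋₁ + Xᵢ). Then for every n ≥ 0 and every integer i ≥ 0, P(Yₙ = i) ≤ (α/(1−α))ⁱ, where α = p⁺/(p⁺ + p⁻). -/

import Mathlib

/-!
With β = p⁺/p⁻ = α/(1−α), the geometric profile i ↦ βⁱ is invariant under the transition of the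
walk away from the boundary: β = p⁻β² + p₀β + p⁺. Since Yₙ is independent of Xₙ₊₁, for i ≥ 1
P(Yₙ₊₁ = i) = p⁻ P(Yₙ = i+1) + p₀ P(Yₙ = i) + p⁺ P(Yₙ = i−1), while at the boundary
P(Yₙ = 0) ≤ 1 = β⁰. Hence the bound P(Yₙ = i) ≤ βⁱ, true for n = 0, propagates by induction on n.
-/

open MeasureTheory ProbabilityTheory

lemma le_pow_of_le_step {β pm p0 pp : ℝ} (hpm : 0 ≤ pm) (hp0 : 0 ≤ p0) (hpp : 0 ≤ pp)
    (hβ0 : 0 ≤ β) (hβ : pm * β ^ 2 + p0 * β + pp = β) {u : ℕ → ℕ → ℝ}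
    (hzero : ∀ n, u n 0 ≤ 1) (hinit : ∀ i, u 0 (i + 1) = 0)
    (hstep : ∀ n k, u (n + 1) (k + 1) ≤ pm * u n (k + 2) + p0 * u n (k + 1) + pp * u n k) :
    ∀ n i, u n i ≤ β ^ i := by
  intro n
  induction n with
  | zero =>
    rintro (_ | i)
    · simpa using hzero 0
    · rw [hinit]; positivity
  | succ n ih =>
    rintro (_ | k)
    · simpa using hzero (n + 1)
    · calc u (n + 1) (k + 1)
          ≤ pm * β ^ (k + 2) + p0 * β ^ (k + 1) + pp * β ^ k :=
            (hstep n k).trans (by gcongr <;> apply ih)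
        _ = β ^ k * (pm * β ^ 2 + p0 * β + pp) := by ring
        _ = β ^ (k + 1) := by rw [hβ, pow_succ]

section

variable {Ω : Type*} [MeasurableSpace Ω] {μ : Measure Ω}

lemma ae_mem_of_sum_measureReal_eq_one {β : Type*} [MeasurableSpace β]
    [MeasurableSingletonClass β] [IsProbabilityMeasure μ] {X : Ω → β} (hX : Measurable X)
    {S : Finset β} (hS : ∑ x ∈ S, μ.real {ω | X ω = x} = 1) : ∀ᵐ ω ∂μ, X ω ∈ S := by
  have hpre : μ.real (X ⁻¹' S) = 1 := by
    rw [← sum_measureReal_preimage_singleton S fun x _ => hX (measurableSet_singleton x)]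
    exact hS
  rw [ae_iff, ← measureReal_eq_zero_iff, show {ω | X ω ∉ S} = (X ⁻¹' S)ᶜ from rfl,
    probReal_compl_eq_one_sub (hX (Finset.measurableSet _)), hpre, sub_self]

lemma measureReal_add_eq_le_sum {G : Type*} [AddCommGroup G] [MeasurableSpace G]
    [MeasurableSingletonClass G] [IsFiniteMeasure μ] {Y X : Ω → G} (hYX : IndepFun Y X μ)
    {S : Finset G} (hX : ∀ᵐ ω ∂μ, X ω ∈ S) (j : G) :
    μ.real {ω | Y ω + X ω = j} ≤ ∑ x ∈ S, μ.real {ω | Y ω = j - x} * μ.real {ω | X ω = x} := by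
  calc μ.real {ω | Y ω + X ω = j}
      ≤ μ.real (⋃ x ∈ S, {ω | Y ω = j - x} ∩ {ω | X ω = x}) := by
        refine ENNReal.toReal_mono (measure_ne_top _ _) (measure_mono_ae ?_)
        filter_upwards [hX] with ω hω hj
        exact Set.mem_biUnion hω ⟨eq_sub_of_add_eq hj, rfl⟩
    _ ≤ ∑ x ∈ S, μ.real ({ω | Y ω = j - x} ∩ {ω | X ω = x}) := measureReal_biUnion_finset_le _ _
    _ = _ := Finset.sum_congr rfl fun x _ => by
        simp only [Measure.real, ← ENNReal.toReal_mul]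
        congr 1
        exact hYX.measure_inter_preimage_eq_mul {j - x} {x} (measurableSet_singleton _)
          (measurableSet_singleton _)

lemma ProbabilityTheory.iIndepFun.indepFun_of_measurable_natural {ι β γ : Type*} [LinearOrder ι]
    [NormedAddCommGroup β] [MeasurableSpace β] [BorelSpace β] [MeasurableSpace γ] {X : ι → Ω → β}
    (hX : ∀ i, StronglyMeasurable (X i)) (hindep : iIndepFun X μ) {Y : Ω → γ} {n j : ι}
    (hY : Measurable[Filtration.natural X hX n] Y) (hnj : n < j) : IndepFun Y (X j) μ := by
  rw [IndepFun_iff_Indep]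
  exact (indep_of_indep_of_le_right (hindep.indep_comap_natural_of_lt hX hnj) hY.comap_le).symm

variable {X Y : ℕ → Ω → ℤ}

lemma measurable_natural_of_reflected (hX : ∀ i, StronglyMeasurable (X i))
    (hY0 : ∀ ω, Y 0 ω = 0) (hYs : ∀ i ω, Y (i + 1) ω = max 0 (Y i ω + X (i + 1) ω)) (n : ℕ) :
    Measurable[Filtration.natural X hX n] (Y n) := by
  induction n with
  | zero => simpa only [funext hY0] using measurable_const
  | succ n ih =>
    rw [funext (hYs n)]
    have hYn := ih.mono ((Filtration.natural X hX).mono n.le_succ) le_rfl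
    have hXn := (Filtration.stronglyAdapted_natural hX (n + 1)).measurable
    exact measurable_const.max (hYn.add hXn)

lemma measureReal_reflected_succ_le [IsProbabilityMeasure μ]
    (hX : ∀ i, StronglyMeasurable (X i)) (hY0 : ∀ ω, Y 0 ω = 0)
    (hYs : ∀ i ω, Y (i + 1) ω = max 0 (Y i ω + X (i + 1) ω))
    (hindep : iIndepFun X μ)
    (hsupp : ∀ i, ∀ᵐ ω ∂μ, X i ω ∈ ({-1, 0, 1} : Finset ℤ)) (n k : ℕ) :
    μ.real {ω | Y (n + 1) ω = (k + 1 : ℕ)} ≤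
      μ.real {ω | X (n + 1) ω = -1} * μ.real {ω | Y n ω = (k + 2 : ℕ)} +
      μ.real {ω | X (n + 1) ω = 0} * μ.real {ω | Y n ω = (k + 1 : ℕ)} +
      μ.real {ω | X (n + 1) ω = 1} * μ.real {ω | Y n ω = k} := by
  have hind : IndepFun (Y n) (X (n + 1)) μ :=
    hindep.indepFun_of_measurable_natural hX
      (measurable_natural_of_reflected hX hY0 hYs n) n.lt_succ_self
  have hevent : {ω | Y (n + 1) ω = (k + 1 : ℕ)} = {ω | Y n ω + X (n + 1) ω = (k + 1 : ℕ)} := by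
    ext ω
    simp only [Set.mem_ofPred_eq, hYs]
    omega
  rw [hevent]
  refine (measureReal_add_eq_le_sum hind (hsupp (n + 1)) _).trans (le_of_eq ?_)
  rw [Finset.sum_insert (by decide), Finset.sum_pair (by decide)]
  push_cast
  ring_nf

end

theorem stmt4_general
    {Ω : Type*} [MeasureSpace Ω] [IsProbabilityMeasure (ℙ : Measure Ω)]
    (pm p0 pp : ℝ) (hpm : 0 ≤ pm) (hp0 : 0 ≤ p0) (hpp : 0 ≤ pp)
    (hsum : pm + p0 + pp = 1) (hgt : pp < pm)
    (X : ℕ → Ω → ℤ) (hmeas : ∀ i, Measurable (X i))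
    (hindep : iIndepFun X ℙ)
    (hXm : ∀ i, (ℙ {ω | X i ω = -1}).toReal = pm)
    (hX0 : ∀ i, (ℙ {ω | X i ω = 0}).toReal = p0)
    (hXp : ∀ i, (ℙ {ω | X i ω = 1}).toReal = pp)
    (Y : ℕ → Ω → ℤ)
    (hY0 : ∀ ω, Y 0 ω = 0)
    (hYs : ∀ i ω, Y (i + 1) ω = max 0 (Y i ω + X (i + 1) ω))
    (α : ℝ) (hα : α = pp / (pp + pm)) :
    ∀ n : ℕ, ∀ i : ℕ,
      (ℙ {ω | Y n ω = (i : ℤ)}).toReal ≤ (α / (1 - α)) ^ i := by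
  have hpm0 : 0 < pm := hpp.trans_lt hgt
  have hratio : α / (1 - α) = pp / pm := by
    rw [hα, one_sub_div (by positivity), add_sub_cancel_left,
      div_div_div_cancel_right₀ (by positivity)]
  have hsupp : ∀ i, ∀ᵐ ω, X i ω ∈ ({-1, 0, 1} : Finset ℤ) := fun i => by
    refine ae_mem_of_sum_measureReal_eq_one (hmeas i) ?_
    rw [Finset.sum_insert (by decide), Finset.sum_pair (by decide)]
    simp only [measureReal_def, hXm, hX0, hXp]
    linarith
  rw [hratio]
  refine le_pow_of_le_step (u := fun n i => (ℙ {ω | Y n ω = i}).toReal) hpm hp0 hpp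
    (by positivity) ?_ (fun n => measureReal_le_one)
    (fun i => by simp [hY0, eq_comm (a := (0 : ℤ)), Nat.cast_add_one_ne_zero]) (fun n k => ?_)
  · field_simp
    linear_combination pp * hsum
  · simpa only [measureReal_def, hXm, hX0, hXp] using
      measureReal_reflected_succ_le (fun i => (hmeas i).stronglyMeasurable) hY0 hYs hindep hsupp n k

/-- Reflected random walk with i.i.d. increments in {-1, 0, +1} and p⁻ > p⁺:
for every n and every integer i ≥ 0, P(Yₙ = i) ≤ (α/(1−α))^i where α = p⁺/(p⁺+p⁻). -/
theorem stmt4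
    {Ω : Type*} [MeasureSpace Ω] [IsProbabilityMeasure (ℙ : Measure Ω)]
    (pm p0 pp : ℝ) (hpm : 0 ≤ pm) (hp0 : 0 ≤ p0) (hpp : 0 ≤ pp)
    (hsum : pm + p0 + pp = 1) (hgt : pp < pm)
    (X : ℕ → Ω → ℤ) (hmeas : ∀ i, Measurable (X i))
    (hindep : iIndepFun X ℙ)
    (hident : ∀ i j, IdentDistrib (X i) (X j) ℙ ℙ)
    (hXm : ∀ i, (ℙ {ω | X i ω = -1}).toReal = pm)
    (hX0 : ∀ i, (ℙ {ω | X i ω = 0}).toReal = p0)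
    (hXp : ∀ i, (ℙ {ω | X i ω = 1}).toReal = pp)
    (Y : ℕ → Ω → ℤ)
    (hY0 : ∀ ω, Y 0 ω = 0)
    (hYs : ∀ i ω, Y (i + 1) ω = max 0 (Y i ω + X (i + 1) ω))
    (α : ℝ) (hα : α = pp / (pp + pm)) :
    ∀ n : ℕ, ∀ i : ℕ,
      (ℙ {ω | Y n ω = (i : ℤ)}).toReal ≤ (α / (1 - α)) ^ i :=
  stmt4_general pm p0 pp hpm hp0 hpp hsum hgt X hmeas hindep hXm hX0 hXp Y hY0 hYs α hα
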